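/- If the infinite sequence 𝐭 over A is ultimately periodic, then the infinite Stewart word T(𝐭) is 3-automatic. -/

import Mathlib

/-- The alphabet B = {0, 1, ?}. -/
inductive B : Type
  | b0 : B
  | b1 : B
  | bq : B
deriving DecidableEq, Inhabited, Repr

/-- The six Stewart patterns a = 01?, b = 10?, c = 0?1, d = 1?0, e = ?01, f = ?10. -/
inductive A : Type
  | a : A
  | b : A
  | c : A
  | d : A
  | e : A
  | f : A
deriving DecidableEq, Inhabited, Repr

open B in
/-- The length-3 word over B associated with a Stewart pattern. -/
def pat : A → List B
  | .a => [b0, b1, bq]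
  | .b => [b1, b0, bq]
  | .c => [b0, bq, b1]
  | .d => [b1, bq, b0]
  | .e => [bq, b0, b1]
  | .f => [bq, b1, b0]

/-- Replace the occurrences of `?` in the first word, in order,
by the symbols of the second word. -/
def fill : List B → List B → List B
  | [], _ => []
  | B.bq :: rest, s :: ss => s :: fill rest ss
  | B.bq :: rest, [] => B.bq :: fill rest []
  | x :: rest, ss => x :: fill rest ss

/-- Helper: the finite Stewart word of the *reverse* of `t`. -/
def Trev : List A → List B
  | [] => [B.bq]
  | g :: t => fill (Trev t ++ Trev t ++ Trev t) (pat g)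

/-- The finite Stewart word `T(t)`, of length `3 ^ t.length`:
`T(ε) = ?`, and `T(t g)` is obtained from `T(t)T(t)T(t)` by replacing its
three occurrences of `?`, in order, by the three symbols of the pattern `g`. -/
def stewT (t : List A) : List B := Trev t.reverse

/-- The length-`r` prefix of an infinite sequence of Stewart patterns, as a list. -/
def prefT (t : ℕ → A) (r : ℕ) : List A := List.ofFn (fun i : Fin r => t i)

/-- The infinite Stewart word `T(𝐭)`: its symbol at position `n` is the eventual
value of `T(t_0 ⋯ t_{r-1})[n]` as `r → ∞`. -/
noncomputable def stewInf (t : ℕ → A) (n : ℕ) : B :=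
  Classical.epsilon (fun v : B => ∃ R : ℕ, ∀ r ≥ R, (stewT (prefT t r)).getD n B.bq = v)

def qidx : A → ℕ
  | .a => 2 | .b => 2 | .c => 1 | .d => 1 | .e => 0 | .f => 0

def val1 (g : A) (s : B) (d : ℕ) : B :=
  if s = B.bq then (if d = qidx g then B.bq else (pat g).getD d B.bq) else s

lemma val1_bq (g : A) {d : ℕ} (hd : d < 3) : val1 g B.bq d = (pat g).getD d B.bq := by
  interval_cases d <;> cases g <;> simp [val1, qidx, pat]

lemma val1_ne (g : A) {s : B} (hs : s ≠ B.bq) (d : ℕ) : val1 g s d = s := by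
  simp [val1, hs]

lemma pat_ne_bq (g : A) {d : ℕ} (hd : d < 3) (h : d ≠ qidx g) :
    (pat g).getD d B.bq ≠ B.bq := by
  interval_cases d <;> cases g <;> simp_all [pat, qidx]

lemma fill_b0 (w s) : fill (B.b0 :: w) s = B.b0 :: fill w s := by cases s <;> rfl
lemma fill_b1 (w s) : fill (B.b1 :: w) s = B.b1 :: fill w s := by cases s <;> rfl
lemma fill_bq (w) (x ss) : fill (B.bq :: w) (x :: ss) = x :: fill w ss := rfl

lemma fill_append {x : List B} (h : B.bq ∉ x) (w s) :
    fill (x ++ w) s = x ++ fill w s := by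
  induction x with
  | nil => rfl
  | cons a l ih =>
    simp only [List.mem_cons, not_or] at h
    cases a
    · rw [List.cons_append, fill_b0, ih h.2, List.cons_append]
    · rw [List.cons_append, fill_b1, ih h.2, List.cons_append]
    · exact absurd rfl h.1

lemma fill_nil (s) : fill [] s = [] := rfl

lemma fill_no {y : List B} (h : B.bq ∉ y) (s) : fill y s = y := by
  have := fill_append h [] s
  simpa [fill_nil] using this

lemma notmem_app {a : B} {u v : List B} (h1 : a ∉ u) (h2 : a ∉ v) : a ∉ u ++ v := by
  simp [List.mem_append, h1, h2]

lemma notmem_block {x y : List B} (hx : B.bq ∉ x) (hy : B.bq ∉ y) {b : B}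
    (hb : b ≠ B.bq) : B.bq ∉ x ++ b :: y := by
  refine notmem_app hx ?_
  simp only [List.mem_cons, not_or]
  exact ⟨fun h => hb h.symm, hy⟩

lemma getD_mid (x y : List B) (b : B) : (x ++ b :: y).getD x.length B.bq = b := by
  rw [List.getD_append_right _ _ _ _ le_rfl]
  simp

lemma getD_mid_ne (x y : List B) (b c : B) {m : ℕ} (hm : m ≠ x.length) :
    (x ++ b :: y).getD m B.bq = (x ++ c :: y).getD m B.bq := by
  rcases lt_or_gt_of_ne hm with h | h
  · rw [List.getD_append _ _ _ _ h, List.getD_append _ _ _ _ h]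
  · rw [List.getD_append_right _ _ _ _ h.le, List.getD_append_right _ _ _ _ h.le]
    obtain ⟨k, hk⟩ : ∃ k, m - x.length = k + 1 :=
      ⟨m - x.length - 1, by omega⟩
    rw [hk]
    simp

lemma getD_ne_bq {w : List B} (h : B.bq ∉ w) {m : ℕ} (hm : m < w.length) :
    w.getD m B.bq ≠ B.bq := by
  rw [List.getD_eq_getElem _ _ hm]
  intro he
  exact h (he ▸ List.getElem_mem hm)

lemma getD_dec_ne {x y : List B} (hx : B.bq ∉ x) (hy : B.bq ∉ y) {m : ℕ}
    (hm : m < (x ++ B.bq :: y).length) (hne : m ≠ x.length) :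
    (x ++ B.bq :: y).getD m B.bq ≠ B.bq := by
  rcases lt_or_gt_of_ne hne with h | h
  · rw [List.getD_append _ _ _ _ h]
    exact getD_ne_bq hx h
  · rw [List.getD_append_right _ _ _ _ h.le]
    obtain ⟨k, hk⟩ : ∃ k, m - x.length = k + 1 := ⟨m - x.length - 1, by omega⟩
    rw [hk]
    simp only [List.getD_cons_succ]
    apply getD_ne_bq hy
    simp only [List.length_append, List.length_cons] at hm
    omega

def valL : List A → ℕ → B
  | [], _ => B.bq
  | g :: s, n => val1 g (valL s (n % 3 ^ s.length)) (n / 3 ^ s.length)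

lemma Trev_spec : ∀ s : List A, ∃ x y : List B,
    Trev s = x ++ B.bq :: y ∧ B.bq ∉ x ∧ B.bq ∉ y ∧
    (Trev s).length = 3 ^ s.length ∧
    ∀ n < 3 ^ s.length, (Trev s).getD n B.bq = valL s n := by
  intro s
  induction s with
  | nil =>
    refine ⟨[], [], rfl, by simp, by simp, rfl, ?_⟩
    intro n hn
    have h0 : n = 0 := by simpa using hn
    subst h0
    rfl
  | cons g s ih =>
    obtain ⟨x, y, hW, hx, hy, hlen, hval⟩ := ih
    set L := 3 ^ s.length with hL
    have hLpos : 0 < L := pow_pos (by norm_num) _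
    have hWlen : (x ++ B.bq :: y).length = L := by rw [← hW]; exact hlen
    have hq : x.length < L := by
      rw [← hWlen]; simp
    obtain ⟨p0, p1, p2, hp⟩ : ∃ p0 p1 p2, pat g = [p0, p1, p2] := by
      cases g <;> exact ⟨_, _, _, rfl⟩
    have key : Trev (g :: s) =
        (x ++ p0 :: y) ++ ((x ++ p1 :: y) ++ (x ++ p2 :: y)) := by
      show fill (Trev s ++ Trev s ++ Trev s) (pat g) = _
      rw [hp, hW]
      have e1 : (x ++ B.bq :: y) ++ (x ++ B.bq :: y) ++ (x ++ B.bq :: y)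
          = x ++ B.bq :: (y ++ (x ++ B.bq :: (y ++ (x ++ B.bq :: y)))) := by
        simp [List.append_assoc]
      rw [e1, fill_append hx, fill_bq, fill_append hy, fill_append hx, fill_bq,
        fill_append hy, fill_append hx, fill_bq, fill_no hy]
      simp [List.append_assoc]
    have hBlen : ∀ b : B, (x ++ b :: y).length = L := by
      intro b
      rw [← hWlen]; simp
    have hlen' : (Trev (g :: s)).length = 3 ^ (g :: s).length := by
      rw [key]
      simp only [List.length_append, hBlen]
      rw [List.length_cons, pow_succ]
      ring
    -- getD at block positions
    have hpk : ∀ k, k < 3 → (pat g).getD k B.bq = [p0, p1, p2].getD k B.bq := by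
      intro k _; rw [hp]
    have hblock : ∀ k m, k < 3 → m < L →
        (Trev (g :: s)).getD (k * L + m) B.bq
          = (x ++ ([p0,p1,p2].getD k B.bq) :: y).getD m B.bq := by
      intro k m hk hm
      rw [key]
      interval_cases k
      · simp only [Nat.zero_mul, Nat.zero_add]
        rw [List.getD_append]
        · rfl
        · rw [hBlen]; omega
      · rw [List.getD_append_right _ _ _ _ (by rw [hBlen]; omega)]
        rw [List.getD_append _ _ _ _ (by rw [hBlen p1]; rw [hBlen p0]; omega)]
        rw [hBlen p0]
        congr 1
        omega
      · rw [List.getD_append_right _ _ _ _ (by rw [hBlen]; omega)]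
        rw [List.getD_append_right _ _ _ _ (by rw [hBlen p1]; rw [hBlen p0]; omega)]
        rw [hBlen p0, hBlen p1]
        congr 1
        omega
    have hvalq : valL s x.length = B.bq := by
      rw [← hval x.length hq, hW, getD_mid]
    have hvalne : ∀ m < L, m ≠ x.length → valL s m ≠ B.bq := by
      intro m hm hne
      rw [← hval m hm, hW]
      exact getD_dec_ne hx hy (by rw [hWlen]; exact hm) hne
    have hgetD : ∀ n < 3 ^ (g :: s).length, (Trev (g :: s)).getD n B.bq = valL (g :: s) n := by
      intro n hn
      have hn3 : n < L * 3 := by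
        rw [List.length_cons, pow_succ] at hn; exact hn
      have hk : n / L < 3 := Nat.div_lt_iff_lt_mul hLpos |>.mpr (by omega)
      have hm : n % L < L := Nat.mod_lt _ hLpos
      have hrepr : (n / L) * L + n % L = n := by
        rw [Nat.mul_comm]; exact Nat.div_add_mod n L
      have hv : valL (g :: s) n = val1 g (valL s (n % L)) (n / L) := rfl
      have hL1 : (Trev (g :: s)).getD n B.bq
          = (x ++ ([p0,p1,p2].getD (n / L) B.bq) :: y).getD (n % L) B.bq := by
        conv_lhs => rw [← hrepr]
        exact hblock _ _ hk hm
      rw [hv, hL1]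
      by_cases hmq : n % L = x.length
      · rw [hmq, getD_mid, hvalq, val1_bq g hk, hp]
      · rw [getD_mid_ne x y _ B.bq hmq, ← hW, hval _ hm,
          val1_ne g (hvalne _ hm hmq)]
    -- decomposition
    have honeq : (p0 = B.bq ∧ p1 ≠ B.bq ∧ p2 ≠ B.bq) ∨
        (p1 = B.bq ∧ p0 ≠ B.bq ∧ p2 ≠ B.bq) ∨
        (p2 = B.bq ∧ p0 ≠ B.bq ∧ p1 ≠ B.bq) := by
      cases g <;>
        (simp only [pat, List.cons.injEq, and_true] at hp
         obtain ⟨e0, e1, e2⟩ := hp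
         subst e0; subst e1; subst e2) <;> decide
    rcases honeq with ⟨h0, h1, h2⟩ | ⟨h1, h0, h2⟩ | ⟨h2, h0, h1⟩
    · refine ⟨x, y ++ ((x ++ p1 :: y) ++ (x ++ p2 :: y)), ?_, hx, ?_, hlen', hgetD⟩
      · rw [key, h0]; simp [List.append_assoc]
      · exact notmem_app hy (notmem_app (notmem_block hx hy h1) (notmem_block hx hy h2))
    · refine ⟨(x ++ p0 :: y) ++ x, y ++ (x ++ p2 :: y), ?_, ?_, ?_, hlen', hgetD⟩
      · rw [key, h1]; simp [List.append_assoc]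
      · exact notmem_app (notmem_block hx hy h0) hx
      · exact notmem_app hy (notmem_block hx hy h2)
    · refine ⟨(x ++ p0 :: y) ++ ((x ++ p1 :: y) ++ x), y, ?_, ?_, hy, hlen', hgetD⟩
      · rw [key, h2]; simp [List.append_assoc]
      · exact notmem_app (notmem_block hx hy h0) (notmem_app (notmem_block hx hy h1) hx)

lemma pat_qidx (g : A) : (pat g).getD (qidx g) B.bq = B.bq := by cases g <;> rfl

def digit (n i : ℕ) : ℕ := n / 3 ^ i % 3

lemma digit_lt (n i : ℕ) : digit n i < 3 := Nat.mod_lt _ (by norm_num)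

lemma digit_mod {i r : ℕ} (h : i < r) (n : ℕ) : digit (n % 3 ^ r) i = digit n i := by
  unfold digit
  rw [show (3:ℕ) ^ r = 3 ^ i * 3 ^ (r - i) by rw [← pow_add]; congr 1; omega]
  rw [Nat.mod_mul_right_div_self]
  exact Nat.mod_mod_of_dvd _ (dvd_pow_self 3 (by omega))

lemma digit_div {n r : ℕ} (h : n < 3 ^ (r + 1)) : n / 3 ^ r = digit n r := by
  unfold digit
  rw [Nat.mod_eq_of_lt]
  rw [Nat.div_lt_iff_lt_mul (pow_pos (by norm_num) r)]
  calc n < 3 ^ (r + 1) := h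
    _ = 3 * 3 ^ r := by ring

lemma digit_zero_of_ge {n r i : ℕ} (hn : n < 3 ^ r) (hi : r ≤ i) : digit n i = 0 := by
  unfold digit
  rw [Nat.div_eq_of_lt (lt_of_lt_of_le hn (pow_le_pow_right₀ (by norm_num) hi))]

def valE (t : ℕ → A) : ℕ → (ℕ → ℕ) → B
  | 0, _ => B.bq
  | r + 1, e => val1 (t r) (valE t r e) (e r)

lemma valE_congr {t : ℕ → A} {e e' : ℕ → ℕ} : ∀ {r : ℕ}, (∀ i < r, e i = e' i) →
    valE t r e = valE t r e'
  | 0, _ => rfl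
  | r + 1, h => by
    show val1 _ _ _ = val1 _ _ _
    rw [valE_congr (fun i hi => h i (by omega)), h r (by omega)]

lemma valE_bq_iff {t : ℕ → A} {e : ℕ → ℕ} : ∀ {r : ℕ}, (∀ i < r, e i < 3) →
    (valE t r e = B.bq ↔ ∀ i < r, e i = qidx (t i))
  | 0, _ => by simp [valE]
  | r + 1, h3 => by
    have ih := valE_bq_iff (t := t) (e := e) (r := r) (fun i hi => h3 i (by omega))
    show val1 (t r) (valE t r e) (e r) = B.bq ↔ _
    by_cases hv : valE t r e = B.bq
    · rw [hv, val1_bq _ (h3 r (by omega))]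
      constructor
      · intro hpat i hi
        by_cases hi' : i < r
        · exact ih.mp hv i hi'
        · have hir : i = r := by omega
          rw [hir]
          by_contra hne
          exact pat_ne_bq (t r) (h3 r (Nat.lt_succ_self r)) hne hpat
      · intro hall
        rw [hall r (by omega), pat_qidx]
    · rw [val1_ne _ hv]
      constructor
      · intro h; exact absurd h hv
      · intro hall
        exact absurd (ih.mpr (fun i hi => hall i (by omega))) hv

lemma valE_mismatch {t : ℕ → A} {e : ℕ → ℕ} {j : ℕ}
    (hlow : ∀ i < j, e i = qidx (t i)) (hne : e j ≠ qidx (t j)) :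
    ∀ {r : ℕ}, j < r → (∀ i < r, e i < 3) →
    valE t r e = (pat (t j)).getD (e j) B.bq
  | r + 1, hj, h3 => by
    show val1 (t r) (valE t r e) (e r) = _
    rcases Nat.lt_succ_iff_lt_or_eq.mp hj with hjr | hjr
    · have ih := valE_mismatch hlow hne hjr (fun i hi => h3 i (by omega))
      rw [ih, val1_ne _ (pat_ne_bq _ (h3 j (by omega)) hne)]
    · subst hjr
      have hv : valE t j e = B.bq :=
        (valE_bq_iff (fun i hi => h3 i (by omega))).mpr hlow
      rw [hv, val1_bq _ (h3 j (by omega))]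

lemma prefT_succ (t : ℕ → A) (r : ℕ) :
    prefT t (r + 1) = (prefT t r).concat (t r) := by
  unfold prefT
  rw [List.ofFn_succ']
  rfl

lemma prefT_rev_succ (t : ℕ → A) (r : ℕ) :
    (prefT t (r + 1)).reverse = t r :: (prefT t r).reverse := by
  rw [prefT_succ, List.concat_eq_append, List.reverse_append]
  rfl

lemma prefT_rev_length (t : ℕ → A) (r : ℕ) : (prefT t r).reverse.length = r := by
  simp [prefT]

lemma valL_prefT (t : ℕ → A) : ∀ r n, n < 3 ^ r →
    valL ((prefT t r).reverse) n = valE t r (fun i => digit n i)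
  | 0, n, _ => rfl
  | r + 1, n, hn => by
    rw [prefT_rev_succ]
    show val1 (t r) (valL ((prefT t r).reverse) (n % 3 ^ (prefT t r).reverse.length))
        (n / 3 ^ (prefT t r).reverse.length) = _
    rw [prefT_rev_length]
    have hmod : n % 3 ^ r < 3 ^ r := Nat.mod_lt _ (pow_pos (by norm_num) r)
    rw [valL_prefT t r _ hmod]
    show _ = val1 (t r) (valE t r fun i => digit n i) (digit n r)
    rw [valE_congr (fun i hi => digit_mod hi n), digit_div hn]

lemma stewT_getD (t : ℕ → A) (r n : ℕ) (hn : n < 3 ^ r) :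
    (stewT (prefT t r)).getD n B.bq = valE t r (fun i => digit n i) := by
  obtain ⟨x, y, _, _, _, _, hval⟩ := Trev_spec ((prefT t r).reverse)
  rw [stewT, hval n (by rw [prefT_rev_length]; exact hn), valL_prefT t r n hn]

lemma n_lt_pow {n r : ℕ} (h : n < r) : n < 3 ^ r :=
  lt_of_lt_of_le (Nat.lt_pow_self (by norm_num : 1 < 3) : n < 3 ^ n)
    (pow_le_pow_right₀ (by norm_num) (by omega))

lemma stewInf_eq_of {t : ℕ → A} {n : ℕ} {v : B}
    (h : ∃ R, ∀ r ≥ R, (stewT (prefT t r)).getD n B.bq = v) : stewInf t n = v := by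
  obtain ⟨R1, h1⟩ := Classical.epsilon_spec
    (⟨v, h⟩ : ∃ v' : B, ∃ R : ℕ, ∀ r ≥ R, (stewT (prefT t r)).getD n B.bq = v')
  obtain ⟨R2, h2⟩ := h
  rw [stewInf, ← h1 (max R1 R2) (le_max_left _ _), h2 (max R1 R2) (le_max_right _ _)]

lemma stewInf_all_match {t : ℕ → A} {n : ℕ} (h : ∀ i, digit n i = qidx (t i)) :
    stewInf t n = B.bq := by
  apply stewInf_eq_of
  refine ⟨n + 1, fun r hr => ?_⟩
  have hn : n < 3 ^ r := n_lt_pow (by omega)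
  rw [stewT_getD t r n hn]
  exact (valE_bq_iff (fun i _ => digit_lt n i)).mpr (fun i _ => h i)

lemma stewInf_mismatch {t : ℕ → A} {n j : ℕ}
    (hlow : ∀ i < j, digit n i = qidx (t i)) (hne : digit n j ≠ qidx (t j)) :
    stewInf t n = (pat (t j)).getD (digit n j) B.bq := by
  apply stewInf_eq_of
  refine ⟨max (n + 1) (j + 1), fun r hr => ?_⟩
  have hn : n < 3 ^ r := n_lt_pow (by omega)
  rw [stewT_getD t r n hn]
  exact valE_mismatch hlow hne (by omega) (fun i _ => digit_lt n i)
instance : Fintype B := ⟨{B.b0, B.b1, B.bq}, fun x => by cases x <;> decide⟩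

open Classical in
noncomputable def tailF (u : ℕ → A) : B :=
  if h : ∃ m, qidx (u m) ≠ 0 then (pat (u (Nat.find h))).getD 0 B.bq else B.bq

def toIdx (N p n : ℕ) : ℕ := if n < N + p then n else N + (n - N) % p

def nxt (N p i : ℕ) : ℕ := if i + 1 < N + p then i + 1 else N

lemma nxt_lt (N p : ℕ) (hp : 1 ≤ p) (i : ℕ) : nxt N p i < N + p := by
  unfold nxt; split <;> omega

lemma toIdx_lt (N p : ℕ) (hp : 1 ≤ p) (n : ℕ) : toIdx N p n < N + p := by
  unfold toIdx
  split
  · omega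
  · have := Nat.mod_lt (n - N) (show 0 < p by omega)
    omega

lemma toIdx_sub {N p m : ℕ} (hm : N + p ≤ m) (hp : 1 ≤ p) :
    toIdx N p m = toIdx N p (m - p) := by
  unfold toIdx
  rw [if_neg (by omega)]
  have h1 : m - N = (m - p - N) + p := by omega
  rw [h1, Nat.add_mod_right]
  by_cases h2 : m - p < N + p
  · rw [if_pos h2, Nat.mod_eq_of_lt (by omega)]
    omega
  · rw [if_neg h2]

lemma toIdx_succ (N p : ℕ) (hp : 1 ≤ p) : ∀ n, toIdx N p (n + 1) = nxt N p (toIdx N p n) := by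
  intro n
  induction n using Nat.strong_induction_on with
  | _ n ih =>
    by_cases h1 : n + 1 < N + p
    · rw [show toIdx N p (n+1) = n+1 from if_pos h1,
        show toIdx N p n = n from if_pos (by omega)]
      rw [nxt, if_pos h1]
    · by_cases h2 : n + 1 = N + p
      · rw [toIdx_sub (by omega) hp, show n + 1 - p = N by omega,
          show toIdx N p N = N from if_pos (by omega),
          show toIdx N p n = n from if_pos (by omega), nxt, if_neg (by omega)]
      · have hn : N + p ≤ n := by omega
        rw [toIdx_sub (show N + p ≤ n + 1 by omega) hp,
          show n + 1 - p = (n - p) + 1 by omega, ih (n - p) (by omega)]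
        conv_rhs => rw [toIdx_sub (show N + p ≤ n by omega) hp]

section Periodic
variable {t : ℕ → A} {N p : ℕ}

lemma t_shift (hper : ∀ n ≥ N, t (n + p) = t n) :
    ∀ k, ∀ x ≥ N, t (x + k * p) = t x := by
  intro k
  induction k with
  | zero => intro x _; simp
  | succ k ih =>
    intro x hx
    rw [show x + (k+1) * p = (x + k * p) + p by ring, hper _ (by omega), ih x hx]

lemma t_toIdx_add (hp : 1 ≤ p) (hper : ∀ n ≥ N, t (n + p) = t n) (n m : ℕ) :
    t (toIdx N p n + m) = t (n + m) := by
  unfold toIdx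
  split
  · rfl
  · have hmod := Nat.mod_add_div' (n - N) p
    have hkey : n + m = (N + (n - N) % p + m) + ((n - N) / p) * p := by omega
    rw [hkey, t_shift hper _ _ (by omega)]

end Periodic

lemma sum_fin_lt (r : ℕ) (e : ℕ → Fin 3) :
    (∑ i : Fin r, (e i.val).val * 3 ^ i.val) < 3 ^ r := by
  induction r generalizing e with
  | zero => simp
  | succ r ih =>
    rw [Fin.sum_univ_succ]
    have h1 : (∑ i : Fin r, (e (i.succ).val).val * 3 ^ (i.succ).val)
        = 3 * ∑ i : Fin r, (e (i.val + 1)).val * 3 ^ i.val := by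
      rw [Finset.mul_sum]
      apply Finset.sum_congr rfl
      intro i _
      simp [Fin.val_succ, pow_succ]
      ring
    rw [h1]
    simp only [Fin.val_zero, pow_zero, mul_one]
    have h2 := ih (fun i => e (i + 1))
    have h3 : (e 0).val < 3 := (e 0).isLt
    simp only [pow_succ]
    omega

lemma digit_sum (r : ℕ) (e : ℕ → Fin 3) (i : ℕ) :
    digit (∑ j : Fin r, (e j.val).val * 3 ^ j.val) i
      = if i < r then (e i).val else 0 := by
  induction r generalizing e i with
  | zero =>
    simp only [Finset.univ_eq_empty, Finset.sum_empty]
    rw [if_neg (by omega)]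
    unfold digit
    simp
  | succ r ih =>
    rw [Fin.sum_univ_succ]
    have h1 : (∑ j : Fin r, (e (j.succ).val).val * 3 ^ (j.succ).val)
        = 3 * ∑ j : Fin r, (e (j.val + 1)).val * 3 ^ j.val := by
      rw [Finset.mul_sum]
      apply Finset.sum_congr rfl
      intro j _
      simp [Fin.val_succ, pow_succ]
      ring
    rw [h1]
    simp only [Fin.val_zero, pow_zero, mul_one]
    set m := ∑ j : Fin r, (e (j.val + 1)).val * 3 ^ j.val with hm
    cases i with
    | zero =>
      rw [if_pos (by omega)]
      unfold digit
      simp only [pow_zero, Nat.div_one]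
      rw [Nat.add_mul_mod_self_left, Nat.mod_eq_of_lt (e 0).isLt]
    | succ i =>
      have hdiv : ((e 0).val + 3 * m) / 3 = m := by
        rw [Nat.add_mul_div_left _ _ (by norm_num), Nat.div_eq_of_lt (e 0).isLt]
        omega
      have hstep : digit ((e 0).val + 3 * m) (i + 1) = digit m i := by
        unfold digit
        rw [show (3:ℕ) ^ (i+1) = 3 * 3 ^ i by ring, ← Nat.div_div_eq_div_mul, hdiv]
      rw [hstep, ih (fun j => e (j + 1)) i]
      by_cases hir : i < r
      · rw [if_pos hir, if_pos (by omega)]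
      · rw [if_neg hir, if_neg (by omega)]


/-- `w` occurs as a factor of the infinite word `x`. -/
def FactorOf (w : List B) (x : ℕ → B) : Prop :=
  ∃ i : ℕ, ∀ j : ℕ, j < w.length → w.getD j B.bq = x (i + j)

/-- `w` has period `p ≥ 1`: `w[i] = w[i+p]` for all `0 ≤ i < |w| - p`. -/
def HasPeriod (w : List B) (p : ℕ) : Prop :=
  1 ≤ p ∧ ∀ i : ℕ, i + p < w.length → w.getD i B.bq = w.getD (i + p) B.bq

/-- The least period `per(w)` of a word. -/
noncomputable def leastPeriod (w : List B) : ℕ := sInf {p | HasPeriod w p}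

/-- The exponent `exp(w) = |w| / per(w)` of a word. -/
noncomputable def expo (w : List B) : ℝ := (w.length : ℝ) / (leastPeriod w : ℝ)

/-- The Hamming distance between two Stewart patterns: the number of positions
`p ∈ {0,1,2}` at which the length-3 words differ. -/
def ham (g h : A) : ℕ :=
  (Finset.univ.filter fun p : Fin 3 => (pat g).getD p B.bq ≠ (pat h).getD p B.bq).card

/-- `t` is ultimately periodic. -/
def UltPeriodic (t : ℕ → A) : Prop :=
  ∃ N : ℕ, ∃ p : ℕ, 1 ≤ p ∧ ∀ n ≥ N, t (n + p) = t n

/-- An infinite word `x` is 3-automatic: there is a finite automaton with output,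
reading base-3 representations least-significant-digit first (trailing zeros
allowed), computing `x`. -/
def IsThreeAutomatic (x : ℕ → B) : Prop :=
  ∃ (Q : Type) (_ : Finite Q) (δ : Q → Fin 3 → Q) (q0 : Q) (τ : Q → B),
    ∀ (r : ℕ) (e : Fin r → Fin 3),
      τ (List.foldl δ q0 (List.ofFn fun i => e i)) =
        x (∑ i : Fin r, (e i).val * 3 ^ (i : ℕ))

theorem stmt_16 (t : ℕ → A) (hup : UltPeriodic t) :
    IsThreeAutomatic (stewInf t) := by
  obtain ⟨N, p, hp, hper⟩ := hup
  have hNp : 0 < N + p := by omega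
  refine ⟨Fin (N + p) × B, inferInstance,
    (fun q d => (⟨nxt N p q.1.val, nxt_lt N p hp _⟩, val1 (t q.1.val) q.2 d.val)),
    (⟨0, hNp⟩, B.bq),
    (fun q => if q.2 = B.bq then tailF (fun m => t (q.1.val + m)) else q.2), ?_⟩
  set δ : (Fin (N + p) × B) → Fin 3 → (Fin (N + p) × B) :=
    fun q d => (⟨nxt N p q.1.val, nxt_lt N p hp _⟩, val1 (t q.1.val) q.2 d.val) with hδ
  set q0 : Fin (N + p) × B := (⟨0, hNp⟩, B.bq) with hq0
  have run : ∀ (r : ℕ) (e : ℕ → Fin 3),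
      List.foldl δ q0 (List.ofFn fun i : Fin r => e i.val) =
        (⟨toIdx N p r, toIdx_lt N p hp r⟩, valE t r (fun i => (e i).val)) := by
    intro r e
    induction r with
    | zero =>
      simp only [List.ofFn_zero, List.foldl_nil]
      refine Prod.ext (Fin.ext ?_) rfl
      simp [toIdx, hNp, hq0]
    | succ r ih =>
      have hofn : (List.ofFn fun i : Fin (r+1) => e i.val)
          = (List.ofFn fun i : Fin r => e i.val) ++ [e r] := by
        rw [List.ofFn_succ', List.concat_eq_append]
        congr 1
      rw [hofn, List.foldl_concat, ih]
      refine Prod.ext (Fin.ext ?_) ?_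
      · exact (toIdx_succ N p hp r).symm
      · show val1 (t (toIdx N p r)) (valE t r fun i => (e i).val) (e r).val = _
        rw [show t (toIdx N p r) = t r by
          have := t_toIdx_add hp hper r 0
          simpa using this]
        rfl
  intro r e
  set e' : ℕ → Fin 3 := fun i => if h : i < r then e ⟨i, h⟩ else 0 with he'
  have hofn2 : (List.ofFn fun i : Fin r => e i) = (List.ofFn fun i : Fin r => e' i.val) := by
    congr 1
    funext i
    simp [he', i.isLt]
  have hsum : (∑ i : Fin r, (e i).val * 3 ^ (i : ℕ))
      = ∑ i : Fin r, (e' i.val).val * 3 ^ i.val := by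
    apply Finset.sum_congr rfl
    intro i _
    simp [he']
  rw [hofn2, hsum, run r e']
  set n := ∑ i : Fin r, (e' i.val).val * 3 ^ i.val with hn
  have hnlt : n < 3 ^ r := sum_fin_lt r e'
  have hdig : ∀ i, digit n i = if i < r then (e' i).val else 0 := digit_sum r e'
  have hdig3 : ∀ i, (fun i => (e' i).val) i < 3 := fun i => (e' i).isLt
  have htail : (fun m => t (toIdx N p r + m)) = fun m => t (r + m) := by
    funext m
    exact t_toIdx_add hp hper r m
  show (if valE t r (fun i => (e' i).val) = B.bq then
      tailF (fun m => t (toIdx N p r + m)) else valE t r (fun i => (e' i).val)) = stewInf t n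
  by_cases hbq : valE t r (fun i => (e' i).val) = B.bq
  · rw [if_pos hbq, htail]
    have hall : ∀ i < r, (e' i).val = qidx (t i) :=
      (valE_bq_iff (fun i _ => (e' i).isLt)).mp hbq
    have hdigq : ∀ i < r, digit n i = qidx (t i) := by
      intro i hi
      rw [hdig i, if_pos hi]
      exact hall i hi
    by_cases hex : ∃ i, digit n i ≠ qidx (t i)
    · -- mismatch exists, necessarily at index ≥ r
      have hj := Nat.find_spec hex
      set j := Nat.find hex with hjdef
      have hjr : r ≤ j := by
        by_contra hc
        exact hj (hdigq j (by omega))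
      have hdj : digit n j = 0 := hdig j ▸ if_neg (by omega)
      have hex' : ∃ m, qidx (t (r + m)) ≠ 0 := by
        refine ⟨j - r, ?_⟩
        rw [show r + (j - r) = j by omega]
        intro h0
        exact hj (by rw [hdj, h0])
      have hm0 := Nat.find_spec hex'
      set m0 := Nat.find hex' with hm0def
      have hjm : r + m0 = j := by
        have h1 : j ≤ r + m0 := by
          apply Nat.find_min' hex
          rw [hdig (r + m0), if_neg (by omega)]
          intro h
          exact hm0 h.symm
        have h2 : m0 ≤ j - r := by
          apply Nat.find_min' hex'
          rw [show r + (j - r) = j by omega]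
          intro h0
          exact hj (by rw [hdj, h0])
        omega
      have hlow : ∀ i < j, digit n i = qidx (t i) := by
        intro i hi
        by_contra hc
        exact absurd (Nat.find_min hex hi) (by simp [hc])
      rw [stewInf_mismatch hlow hj]
      rw [tailF, dif_pos hex']
      rw [hjm, hdj]
    · push_neg at hex
      rw [stewInf_all_match hex]
      rw [tailF, dif_neg]
      push_neg
      intro m
      have := hex (r + m)
      rw [hdig (r + m), if_neg (by omega)] at this
      exact this.symm
  · rw [if_neg hbq]
    have hexr : ∃ i < r, (e' i).val ≠ qidx (t i) := by
      by_contra hc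
      push_neg at hc
      exact hbq ((valE_bq_iff (fun i _ => (e' i).isLt)).mpr hc)
    obtain ⟨i0, hi0r, hi0⟩ := hexr
    have hex : ∃ i, digit n i ≠ qidx (t i) := by
      refine ⟨i0, ?_⟩
      rw [hdig i0, if_pos hi0r]
      exact hi0
    have hj := Nat.find_spec hex
    set j := Nat.find hex with hjdef
    have hjr : j < r := by
      have : j ≤ i0 := Nat.find_min' hex (by rw [hdig i0, if_pos hi0r]; exact hi0)
      omega
    have hdj : digit n j = (e' j).val := by rw [hdig j, if_pos hjr]
    have hlow : ∀ i < j, digit n i = qidx (t i) := by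
      intro i hi
      by_contra hc
      exact absurd (Nat.find_min hex hi) (by simp [hc])
    rw [stewInf_mismatch hlow hj]
    have hlow' : ∀ i < j, (e' i).val = qidx (t i) := by
      intro i hi
      rw [← hlow i hi, hdig i, if_pos (by omega)]
    have hne' : (e' j).val ≠ qidx (t j) := by rw [← hdj]; exact hj
    rw [valE_mismatch hlow' hne' hjr (fun i _ => (e' i).isLt), hdj]
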